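/- arXiv:2605.02068 — 4 statements merged into one kernel-verified Lean document; each statement's English description precedes it below -/
import Mathlib

section
/- Let a < b be real numbers and let f : ℝ → ℝ be continuous with f(a) < 0 and f(b) > 0. If x : ℝ → ℝ is differentiable with x'(t) = f(x(t)) for all t ∈ ℝ and x(0) ∈ [a,b], then x(t) ∈ [a,b] for all t ≤ 0. -/
/- Reverse time: `τ ↦ -x (t₀ - τ)` has derivative `x' (t₀ - τ)`, which is negative whenever the
curve touches the level `-a`, so by the fencing theorem `image_le_of_deriv_right_lt_deriv_boundary`
it stays below `-a`. With `x' = f ∘ x` this applies at both endpoints of `[a, b]`, since the field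
points outward there. -/

theorem le_of_hasDerivAt_neg_at_level {x x' : ℝ → ℝ} {a t₀ : ℝ}
    (hx : ∀ t, HasDerivAt x (x' t) t) (hlevel : ∀ t, x t = a → x' t < 0) (h₀ : a ≤ x t₀) :
    ∀ t ≤ t₀, a ≤ x t := by
  have hrev : ∀ τ, HasDerivAt (fun τ => -x (t₀ - τ)) (x' (t₀ - τ)) τ := fun τ =>
    ((hx (t₀ - τ)).comp_const_sub t₀ τ).neg.congr_deriv (neg_neg _)
  intro t ht
  have hfence := image_le_of_deriv_right_lt_deriv_boundary (a := 0) (b := t₀ - t)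
    (fun τ _ => (hrev τ).continuousAt.continuousWithinAt) (fun τ _ => (hrev τ).hasDerivWithinAt)
    (B := fun _ => -a) (by simpa using h₀) (fun _ => hasDerivAt_const _ (-a))
    (fun τ _ hτ => hlevel (t₀ - τ) (neg_inj.mp hτ))
    (Set.mem_Icc.mpr ⟨by linarith, le_rfl⟩)
  simpa using hfence

theorem le_of_hasDerivAt_pos_at_level {x x' : ℝ → ℝ} {b t₀ : ℝ}
    (hx : ∀ t, HasDerivAt x (x' t) t) (hlevel : ∀ t, x t = b → 0 < x' t) (h₀ : x t₀ ≤ b) :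
    ∀ t ≤ t₀, x t ≤ b := fun t ht =>
  neg_le_neg_iff.mp <| le_of_hasDerivAt_neg_at_level (x := -x) (x' := -x')
    (fun t => (hx t).neg) (fun t ht => neg_neg_iff_pos.mpr (hlevel t (neg_inj.mp ht)))
    (neg_le_neg h₀) t ht

theorem stmt_3_general (a b : ℝ) (f : ℝ → ℝ)
    (hfa : f a < 0) (hfb : 0 < f b) (x : ℝ → ℝ)
    (hode : ∀ t : ℝ, HasDerivAt x (f (x t)) t)
    (h0 : x 0 ∈ Set.Icc a b) :
    ∀ t ≤ (0 : ℝ), x t ∈ Set.Icc a b := fun t ht =>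
  ⟨le_of_hasDerivAt_neg_at_level hode (fun _ hs => hs ▸ hfa) h0.1 t ht,
    le_of_hasDerivAt_pos_at_level hode (fun _ hs => hs ▸ hfb) h0.2 t ht⟩

/-- Backward invariance: if `f a < 0` and `f b > 0`, global solutions of
`ẋ = f(x)` starting in `[a,b]` remain in `[a,b]` for all negative times. -/
theorem stmt_3 (a b : ℝ) (hab : a < b) (f : ℝ → ℝ) (hf : Continuous f)
    (hfa : f a < 0) (hfb : 0 < f b) (x : ℝ → ℝ)
    (hode : ∀ t : ℝ, HasDerivAt x (f (x t)) t)
    (h0 : x 0 ∈ Set.Icc a b) :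
    ∀ t ≤ (0 : ℝ), x t ∈ Set.Icc a b :=
  stmt_3_general a b f hfa hfb x hode h0
end

section
/- Let f : ℝ → ℝ be continuous and let x : ℝ → ℝ be differentiable with x'(t) = f(x(t)) for all t ∈ ℝ. Then x is monotone: either x(s) ≤ x(t) for all s ≤ t, or x(s) ≥ x(t) for all s ≤ t. -/
/-!
Wherever a solution returns to the level `x a`, its derivative is `f (x a)`; so when `f (x a) > 0`
it can only cross that level upwards, and the fencing theorem gives `x a ≤ x t` for all `t ≥ a`.
If `f (x a) > 0` and `f (x b) < 0`, this bound, applied also to the time-reversed and the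
point-reflected solutions, forces `x a = x b`, which is absurd. Hence `f ∘ x` has constant sign.
-/

def IsODESolution (f x : ℝ → ℝ) : Prop :=
  ∀ t, HasDerivAt x (f (x t)) t

namespace IsODESolution

variable {f x : ℝ → ℝ}

theorem differentiable (hx : IsODESolution f x) : Differentiable ℝ x :=
  fun t => (hx t).differentiableAt

theorem deriv_eq (hx : IsODESolution f x) (t : ℝ) : deriv x t = f (x t) :=
  (hx t).deriv

theorem timeReversal (hx : IsODESolution f x) :
    IsODESolution (fun u => -f u) (fun t => x (-t)) := fun t => by
  have h := (hx (-t)).comp t (hasDerivAt_neg t)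
  rw [mul_neg_one] at h
  exact h

theorem pointReflection (hx : IsODESolution f x) :
    IsODESolution (fun u => f (-u)) (fun t => -x (-t)) := fun t => by
  have h := (hx.timeReversal t).neg
  simp only [neg_neg] at h ⊢
  exact h

theorem le_of_pos (hx : IsODESolution f x) {a t : ℝ} (ha : 0 < f (x a)) (hat : a ≤ t) :
    x a ≤ x t :=
  image_le_of_deriv_right_lt_deriv_boundary (f := fun _ => x a) (f' := fun _ => 0)
    continuousOn_const (fun _ _ => hasDerivWithinAt_const _ _ _) le_rfl hx
    (fun _ _ hs => hs ▸ ha) ⟨hat, le_rfl⟩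

theorem nonpos_of_neg_of_le (hx : IsODESolution f x) {a b : ℝ} (hab : a ≤ b)
    (hb : f (x b) < 0) : f (x a) ≤ 0 := by
  by_contra! ha
  have hle : x a ≤ x b := hx.le_of_pos ha hab
  have hge : x b ≤ x a := by
    simpa using hx.timeReversal.le_of_pos (a := -b) (t := -a) (by simpa using hb) (neg_le_neg hab)
  have hxab : x a = x b := le_antisymm hle hge
  exact (hxab ▸ ha).not_gt hb

theorem nonpos_of_neg (hx : IsODESolution f x) {b : ℝ} (hb : f (x b) < 0) (a : ℝ) :
    f (x a) ≤ 0 := by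
  rcases le_total a b with hab | hba
  · exact hx.nonpos_of_neg_of_le hab hb
  · simpa using hx.pointReflection.nonpos_of_neg_of_le (a := -a) (b := -b) (neg_le_neg hba)
      (by simpa using hb)

theorem monotone_or_antitone (hx : IsODESolution f x) : Monotone x ∨ Antitone x := by
  by_cases hnonneg : ∀ t, 0 ≤ f (x t)
  · exact .inl <| monotone_of_deriv_nonneg hx.differentiable fun t => hx.deriv_eq t ▸ hnonneg t
  · obtain ⟨b, hb⟩ : ∃ b, f (x b) < 0 := by simpa using hnonneg
    exact .inr <| antitone_of_deriv_nonpos hx.differentiable fun t =>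
      hx.deriv_eq t ▸ hx.nonpos_of_neg hb t

end IsODESolution

theorem stmt_4_general (f : ℝ → ℝ) (x : ℝ → ℝ)
    (hode : ∀ t : ℝ, HasDerivAt x (f (x t)) t) :
    Monotone x ∨ Antitone x :=
  IsODESolution.monotone_or_antitone hode

/-- Solutions of scalar autonomous ODEs are monotone. -/
theorem stmt_4 (f : ℝ → ℝ) (hf : Continuous f) (x : ℝ → ℝ)
    (hode : ∀ t : ℝ, HasDerivAt x (f (x t)) t) :
    Monotone x ∨ Antitone x :=
  stmt_4_general f x hode
end

section
/- Let f : ℝ → ℝ be locally Lipschitz and let x : ℝ → ℝ be a nonconstant differentiable function with x'(t) = f(x(t)) for all t ∈ ℝ, such that x is bounded. Then x is strictly monotone, the limits L₋ = lim_{t→−∞} x(t) and L₊ = lim_{t→+∞} x(t) exist, f(L₋) = 0, f(L₊) = 0, and L₋ ≠ L₊. (That is, every nonconstant bounded orbit of a scalar autonomous ODE is a heteroclinic orbit between two distinct equilibria.) -/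
/-!
A nonconstant solution never meets a zero of `f`, since by uniqueness of solutions it
would coincide with the constant solution there, so by Darboux `f ∘ x = x'` has constant sign
and `x` is strictly monotone. Being bounded, it converges at `±∞`, and a limit `L` of a solution
is an equilibrium: by the mean value theorem `f (x cₙ) = x (n + 1) - x n → 0` with `cₙ → ∞`.
The limits differ since `x` is strictly monotone.
-/

open Filter Set Topology Bornology

variable {f x : ℝ → ℝ}

lemma hasDerivAt_comp_neg_of_ode (hx : ∀ t, HasDerivAt x (f (x t)) t) (t : ℝ) :
    HasDerivAt (fun s => x (-s)) (-f (x (-t))) t :=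
  ((hx (-t)).comp t (hasDerivAt_neg t)).congr_deriv (by ring)

lemma apply_eq_zero_of_tendsto_atTop (hf : Continuous f) (hx : ∀ t, HasDerivAt x (f (x t)) t)
    {L : ℝ} (hL : Tendsto x atTop (𝓝 L)) : f L = 0 := by
  have hxc : Continuous x := continuous_iff_continuousAt.2 fun t => (hx t).continuousAt
  obtain ⟨c, hc, hslope⟩ : ∃ c : ℕ → ℝ, (∀ n : ℕ, c n ∈ Ioo (n : ℝ) (n + 1)) ∧
      ∀ n, f (x (c n)) = x (n + 1) - x n := by
    choose c hc hslope using fun n : ℕ => exists_hasDerivAt_eq_slope x (fun t => f (x t))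
      (lt_add_one (n : ℝ)) hxc.continuousOn fun t _ => hx t
    exact ⟨c, hc, fun n => by simpa using hslope n⟩
  have hc_top : Tendsto c atTop atTop :=
    tendsto_atTop_mono (fun n => (hc n).1.le) tendsto_natCast_atTop_atTop
  have hdiff : Tendsto (fun n : ℕ => x (n + 1) - x n) atTop (𝓝 0) := by
    simpa using (hL.comp (tendsto_atTop_add_const_right _ 1 tendsto_natCast_atTop_atTop)).sub
      (hL.comp tendsto_natCast_atTop_atTop)
  refine tendsto_nhds_unique ((hf.tendsto L).comp (hL.comp hc_top)) ?_
  simpa only [Function.comp_def, hslope] using hdiff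

lemma apply_eq_zero_of_tendsto_atBot (hf : Continuous f) (hx : ∀ t, HasDerivAt x (f (x t)) t)
    {L : ℝ} (hL : Tendsto x atBot (𝓝 L)) : f L = 0 :=
  neg_eq_zero.1 <| apply_eq_zero_of_tendsto_atTop (f := fun y => -f y) hf.neg
    (hasDerivAt_comp_neg_of_ode hx) (tendsto_comp_neg_atTop_iff.2 hL)

lemma eq_of_apply_eq_zero (hf : LocallyLipschitz f) (hx : ∀ t, HasDerivAt x (f (x t)) t)
    {t₀ : ℝ} (h0 : f (x t₀) = 0) (t : ℝ) : x t = x t₀ := by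
  have hxc : Continuous x := continuous_iff_continuousAt.2 fun t => (hx t).continuousAt
  obtain ⟨K, u, hu, hK⟩ := hf (x t₀)
  have hopen : IsOpen {t | x t = x t₀} := isOpen_iff_mem_nhds.2 fun t₁ (ht₁ : x t₁ = x t₀) => by
    have hmem : ∀ᶠ t in 𝓝 t₁, x t ∈ u := hxc.continuousAt.eventually_mem (ht₁ ▸ hu)
    exact ODE_solution_unique_of_eventually (v := fun _ y => f y) (s := fun _ => u)
      (.of_forall fun _ => hK) (hmem.mono fun t ht => ⟨hx t, ht⟩)
      (.of_forall fun t => ⟨by simpa [h0] using hasDerivAt_const t (x t₀), mem_of_mem_nhds hu⟩)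
      ht₁
  have hclopen : IsClopen {t | x t = x t₀} := ⟨isClosed_eq hxc continuous_const, hopen⟩
  exact eq_univ_iff_forall.1 (hclopen.eq_univ ⟨t₀, rfl⟩) t

lemma strictMono_or_strictAnti_of_ode (hf : LocallyLipschitz f)
    (hx : ∀ t, HasDerivAt x (f (x t)) t) (hnc : ∃ s t, x s ≠ x t) :
    StrictMono x ∨ StrictAnti x := by
  have hne : ∀ t, f (x t) ≠ 0 := fun t₀ h0 => by
    obtain ⟨s, t, hst⟩ := hnc
    exact hst ((eq_of_apply_eq_zero hf hx h0 s).trans (eq_of_apply_eq_zero hf hx h0 t).symm)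
  rcases hasDerivWithinAt_forall_lt_or_forall_gt_of_forall_ne convex_univ
    (fun t _ => (hx t).hasDerivWithinAt) (fun t _ => hne t) with hneg | hpos
  · exact .inr (strictAnti_of_hasDerivAt_neg hx fun t => hneg t trivial)
  · exact .inl (strictMono_of_hasDerivAt_pos hx fun t => hpos t trivial)

lemma exists_heteroclinic_of_strictMono (hf : Continuous f)
    (hx : ∀ t, HasDerivAt x (f (x t)) t) (hmono : StrictMono x) (hB : IsBounded (range x)) :
    ∃ Lm Lp, Tendsto x atBot (𝓝 Lm) ∧ Tendsto x atTop (𝓝 Lp) ∧ f Lm = 0 ∧ f Lp = 0 ∧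
      Lm < Lp := by
  have hm : Tendsto x atBot (𝓝 (⨅ t, x t)) := tendsto_atBot_ciInf hmono.monotone hB.bddBelow
  have hp : Tendsto x atTop (𝓝 (⨆ t, x t)) := tendsto_atTop_ciSup hmono.monotone hB.bddAbove
  refine ⟨_, _, hm, hp, apply_eq_zero_of_tendsto_atBot hf hx hm,
    apply_eq_zero_of_tendsto_atTop hf hx hp, ?_⟩
  calc ⨅ t, x t ≤ x 0 := hmono.monotone.le_of_tendsto hm 0
    _ < x 1 := hmono zero_lt_one
    _ ≤ ⨆ t, x t := hmono.monotone.ge_of_tendsto hp 1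

/-- Every nonconstant bounded orbit of a scalar autonomous ODE (with locally
Lipschitz right-hand side) is a heteroclinic orbit between two distinct
equilibria. -/
theorem stmt_6 (f : ℝ → ℝ) (hf : LocallyLipschitz f) (x : ℝ → ℝ)
    (hode : ∀ t : ℝ, HasDerivAt x (f (x t)) t)
    (hnc : ∃ s t : ℝ, x s ≠ x t)
    (hbdd : ∃ C : ℝ, ∀ t : ℝ, |x t| ≤ C) :
    (StrictMono x ∨ StrictAnti x) ∧
    ∃ Lm Lp : ℝ,
      Filter.Tendsto x Filter.atBot (nhds Lm) ∧
      Filter.Tendsto x Filter.atTop (nhds Lp) ∧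
      f Lm = 0 ∧ f Lp = 0 ∧ Lm ≠ Lp := by
  obtain ⟨C, hC⟩ := hbdd
  have hB : IsBounded (range x) := isBounded_iff_forall_norm_le.2 ⟨C, forall_mem_range.2 hC⟩
  rcases strictMono_or_strictAnti_of_ode hf hode hnc with hmono | hanti
  · obtain ⟨Lm, Lp, hm, hp, hfm, hfp, hlt⟩ :=
      exists_heteroclinic_of_strictMono hf.continuous hode hmono hB
    exact ⟨.inl hmono, Lm, Lp, hm, hp, hfm, hfp, hlt.ne⟩
  · -- run time backwards: `t ↦ x (-t)` is an increasing solution of `ẏ = -f y`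
    obtain ⟨Lm, Lp, hm, hp, hfm, hfp, hlt⟩ :=
      exists_heteroclinic_of_strictMono hf.continuous.neg (hasDerivAt_comp_neg_of_ode hode)
        (hanti.comp strictMono_id.neg) (by rwa [← neg_surjective.range_comp x] at hB)
    refine ⟨.inr hanti, Lp, Lm, tendsto_comp_neg_atTop_iff.1 hp, ?_, neg_eq_zero.1 hfp,
      neg_eq_zero.1 hfm, hlt.ne'⟩
    simpa using tendsto_comp_neg_atTop_iff.2 hm
end

section
/- Let a < b < c be real numbers and let f : ℝ × [0,1] → ℝ be smooth (C^∞) satisfying: (S1) f(a,λ) < 0 for all λ ∈ [0,1]; (S2) f(c,λ) < 0 for all λ ∈ [0,1]; (S3) f(x,1) < 0 for all x ∈ [a,c]; and (S4) f(b,0) > 0. Then there exists a smooth map F : ℝ × [0,1] × [0,1] → ℝ such that: (h1) F(a,λ,σ) = f(a,λ) for all λ, σ ∈ [0,1]; (h2) F(c,λ,σ) = f(c,λ) for all λ, σ ∈ [0,1]; (h3) F(x,1,σ) < 0 for all x ∈ [a,c] and all σ ∈ [0,1]; (h4) F(b,0,σ) = f(b,0) for all σ ∈ [0,1]; (h5)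 F(x,λ,0) = f(x,λ) for all x, λ; and such that h(x,λ) := F(x,λ,1) admits λ₀ ∈ (0,1) with: (C1) for every λ ∈ [0,λ₀), h(·,λ) has exactly two zeros in [a,c], namely u_λ < s_λ, with ∂h/∂x(u_λ,λ) > 0 and ∂h/∂x(s_λ,λ) < 0, and moreover u₀ ∈ (a,b) and s₀ ∈ (b,c); (C2) h(·,λ₀) has a unique zero x₀ in [a,c], which lies in (a,c) and satisfies ∂h/∂x(x₀,λ₀) = 0, ∂²h/∂x²(x₀,λ₀) ≠ 0, and ∂h/∂λ(x₀,λ₀) ≠ 0 (a nondegenerate saddle-node bifurcation); and (C3) for every λ ∈ (λ₀,1], h(x,λ) ≠ 0 for all x ∈ [a,c]. -/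
open Set Filter

/-- A convex combination of two negative numbers is negative. -/
lemma stmt15_convex_neg {u v t : ℝ} (hu : u < 0) (hv : v < 0) (ht0 : 0 ≤ t) (ht1 : t ≤ 1) :
    u + t * (v - u) < 0 := by
  rcases lt_or_ge t 1 with h | h
  · nlinarith [mul_pos (by linarith : (0:ℝ) < 1 - t) (by linarith : (0:ℝ) < -u),
      mul_nonneg ht0 (by linarith : (0:ℝ) ≤ -v)]
  · have : t = 1 := le_antisymm ht1 h
    subst this; linarith

set_option maxHeartbeats 2000000 in
/-- One-dimensional case of the main theorem: a smooth vector field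
`f(x,λ)` satisfying the sign assumptions S1–S4 can be smoothly deformed,
without changing it at the data constraints (h1–h4), into a vector field
`h(x,λ) = F(x,λ,1)` exhibiting exactly one nondegenerate saddle-node
bifurcation on `[a,c]` (C1–C3). -/
theorem stmt_15 (a b c : ℝ) (hab : a < b) (hbc : b < c)
    (f : ℝ → ℝ → ℝ) (hf : ContDiff ℝ (⊤ : ℕ∞) fun p : ℝ × ℝ => f p.1 p.2)
    (hS1 : ∀ lam ∈ Set.Icc (0 : ℝ) 1, f a lam < 0)
    (hS2 : ∀ lam ∈ Set.Icc (0 : ℝ) 1, f c lam < 0)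
    (hS3 : ∀ x ∈ Set.Icc a c, f x 1 < 0)
    (hS4 : 0 < f b 0) :
    ∃ F : ℝ → ℝ → ℝ → ℝ,
      -- smoothness of the two-parameter family
      (ContDiff ℝ (⊤ : ℕ∞) fun p : ℝ × ℝ × ℝ => F p.1 p.2.1 p.2.2) ∧
      -- (h1)
      (∀ lam ∈ Set.Icc (0 : ℝ) 1, ∀ σ ∈ Set.Icc (0 : ℝ) 1, F a lam σ = f a lam) ∧
      -- (h2)
      (∀ lam ∈ Set.Icc (0 : ℝ) 1, ∀ σ ∈ Set.Icc (0 : ℝ) 1, F c lam σ = f c lam) ∧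
      -- (h3)
      (∀ x ∈ Set.Icc a c, ∀ σ ∈ Set.Icc (0 : ℝ) 1, F x 1 σ < 0) ∧
      -- (h4)
      (∀ σ ∈ Set.Icc (0 : ℝ) 1, F b 0 σ = f b 0) ∧
      -- (h5)
      (∀ x lam : ℝ, F x lam 0 = f x lam) ∧
      -- the deformed field h(x,λ) = F(x,λ,1) has a saddle-node bifurcation
      ∃ lam0 ∈ Set.Ioo (0 : ℝ) 1,
        -- (C1): for λ < λ₀, exactly two zeros in [a,c], hyperbolic of
        -- opposite stability, unstable one in (a,b) and stable one in (b,c)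
        -- at λ = 0
        (∀ lam ∈ Set.Ico (0 : ℝ) lam0, ∃ u s : ℝ,
          u < s ∧ u ∈ Set.Icc a c ∧ s ∈ Set.Icc a c ∧
          F u lam 1 = 0 ∧ F s lam 1 = 0 ∧
          (∀ x ∈ Set.Icc a c, F x lam 1 = 0 → x = u ∨ x = s) ∧
          0 < deriv (fun x => F x lam 1) u ∧ deriv (fun x => F x lam 1) s < 0 ∧
          (lam = 0 → u ∈ Set.Ioo a b ∧ s ∈ Set.Ioo b c)) ∧
        -- (C2): nondegenerate saddle-node at λ₀
        (∃ x0 ∈ Set.Ioo a c,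
          F x0 lam0 1 = 0 ∧
          (∀ x ∈ Set.Icc a c, F x lam0 1 = 0 → x = x0) ∧
          deriv (fun x => F x lam0 1) x0 = 0 ∧
          deriv (deriv (fun x => F x lam0 1)) x0 ≠ 0 ∧
          deriv (fun lam => F x0 lam 1) lam0 ≠ 0) ∧
        -- (C3): no zeros in [a,c] for λ > λ₀
        (∀ lam ∈ Set.Ioc lam0 1, ∀ x ∈ Set.Icc a c, F x lam 1 ≠ 0) := by
  -- abbreviations
  have hfa0 : f a 0 < 0 := hS1 0 ⟨le_refl _, by norm_num⟩
  have hfc0 : f c 0 < 0 := hS2 0 ⟨le_refl _, by norm_num⟩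
  have hP : 0 < f b 0 := hS4
  set P : ℝ := f b 0 with hPdef
  set d1 : ℝ := b - a with hd1
  set d2 : ℝ := c - b with hd2
  have hd10 : 0 < d1 := by simp only [hd1]; linarith
  have hd20 : 0 < d2 := by simp only [hd2]; linarith
  -- the eta constant
  set η : ℝ := 1 - Real.exp (-(1/2) : ℝ) with hηdef
  have hη0 : 0 < η := by
    have : Real.exp (-(1/2) : ℝ) < 1 := Real.exp_lt_one_iff.mpr (by norm_num)
    simp only [hηdef]; linarith
  have hη1 : η < 1 := by
    have : 0 < Real.exp (-(1/2) : ℝ) := Real.exp_pos _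
    simp only [hηdef]; linarith
  -- the bounds
  set Ma : ℝ := 2 * (-(f a 0)) / d1 ^ 2 with hMadef
  set Mc : ℝ := 2 * (-(f c 0)) / d2 ^ 2 with hMcdef
  have hMa0 : 0 < Ma := by rw [hMadef]; apply div_pos (by linarith) (by positivity)
  have hMc0 : 0 < Mc := by rw [hMcdef]; apply div_pos (by linarith) (by positivity)
  set M : ℝ := Ma + Mc with hMdef
  have hM0 : 0 < M := by simp only [hMdef]; linarith
  -- the amplitude K
  set K : ℝ := min (min (d1^2/2) (d2^2/2)) (P/(2*η*M)) with hKdef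
  have hK0 : 0 < K := by
    apply lt_min (lt_min (by positivity) (by positivity)) (by positivity)
  have hK1 : K ≤ d1^2/2 := le_trans (min_le_left _ _) (min_le_left _ _)
  have hK2 : K ≤ d2^2/2 := le_trans (min_le_left _ _) (min_le_right _ _)
  have hK3 : K ≤ P/(2*η*M) := min_le_right _ _
  have hKP : 2 * M * (K * η) ≤ P := by
    have h1 : K * (2*η*M) ≤ P/(2*η*M) * (2*η*M) := by
      apply mul_le_mul_of_nonneg_right hK3 (by positivity)
    rw [div_mul_cancel₀] at h1
    · nlinarith
    · positivity
  -- the bifurcation function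
  clear_value P d1 d2 η Ma Mc M K
  set τ : ℝ → ℝ := fun lam => K * (1 - Real.exp (lam - 1/2)) with hτdef
  have hτK : ∀ lam, τ lam < K := by
    intro lam
    have h1 := Real.exp_pos (lam - 1/2)
    have h2 : 0 < K * Real.exp (lam - 1/2) := mul_pos hK0 h1
    simp only [hτdef]; nlinarith
  have hτhalf : τ (1/2) = 0 := by simp [hτdef]
  have hτpos : ∀ lam, lam < 1/2 → 0 < τ lam := by
    intro lam h
    have h1 : Real.exp (lam - 1/2) < 1 := Real.exp_lt_one_iff.mpr (by linarith)
    have h2 : 0 < K * (1 - Real.exp (lam - 1/2)) := mul_pos hK0 (by linarith)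
    simp only [hτdef]; linarith
  have hτneg : ∀ lam, 1/2 < lam → τ lam < 0 := by
    intro lam h
    have h1 : 1 < Real.exp (lam - 1/2) := Real.one_lt_exp_iff.mpr (by linarith)
    have h2 : 0 < K * (Real.exp (lam - 1/2) - 1) := mul_pos hK0 (by linarith)
    simp only [hτdef]; linarith
  have hτzero : τ 0 = K * η := by
    simp only [hτdef, hηdef]; norm_num
  -- denominators
  clear_value τ
  set Qa : ℝ → ℝ := fun lam => τ lam - d1^2 with hQadef
  set Qc : ℝ → ℝ := fun lam => τ lam - d2^2 with hQcdef
  have hQa0 : ∀ lam, Qa lam < 0 := by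
    intro lam
    have h1 := hτK lam
    have h2 : 0 < d1^2 := by positivity
    simp only [hQadef]; linarith
  have hQc0 : ∀ lam, Qc lam < 0 := by
    intro lam
    have h1 := hτK lam
    have h2 : 0 < d2^2 := by positivity
    simp only [hQcdef]; linarith
  clear_value Qa Qc
  set Ea : ℝ → ℝ := fun lam => f a lam / Qa lam with hEadef
  set Ec : ℝ → ℝ := fun lam => f c lam / Qc lam with hEcdef
  have hEa0 : ∀ lam ∈ Icc (0:ℝ) 1, 0 < Ea lam := by
    intro lam hlam
    exact div_pos_of_neg_of_neg (hS1 lam hlam) (hQa0 lam)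
  have hEc0 : ∀ lam ∈ Icc (0:ℝ) 1, 0 < Ec lam := by
    intro lam hlam
    exact div_pos_of_neg_of_neg (hS2 lam hlam) (hQc0 lam)
  -- the bound L ≤ M
  clear_value Ea Ec
  set L : ℝ := ((c - b) * Ea 0 + (b - a) * Ec 0)/(c - a) with hLdef
  have hL0 : 0 < L := by
    have h1 := hEa0 0 ⟨le_refl _, by norm_num⟩
    have h2 := hEc0 0 ⟨le_refl _, by norm_num⟩
    rw [hLdef]
    exact div_pos (by nlinarith) (by linarith)
  have hQaval : Qa 0 = K * η - d1^2 := by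
    rw [hQadef]; simp only; rw [hτzero]
  have hQcval : Qc 0 = K * η - d2^2 := by
    rw [hQcdef]; simp only; rw [hτzero]
  have hEaval : Ea 0 * Qa 0 = f a 0 := by
    rw [hEadef]; exact div_mul_cancel₀ _ (hQa0 0).ne
  have hEcval : Ec 0 * Qc 0 = f c 0 := by
    rw [hEcdef]; exact div_mul_cancel₀ _ (hQc0 0).ne
  have hKη : 0 < K * η := mul_pos hK0 hη0
  have hKηK : K * η < K := by nlinarith [mul_pos hK0 (by linarith : (0:ℝ) < 1 - η)]
  have hEaM : Ea 0 ≤ Ma := by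
    have hEapos := hEa0 0 ⟨le_refl _, by norm_num⟩
    have hkey : 0 ≤ Ea 0 * (d1^2 - 2*(K*η)) := mul_nonneg hEapos.le (by linarith)
    rw [hMadef, le_div_iff₀ (by positivity : (0:ℝ) < d1^2)]
    nlinarith [hEaval, hQaval]
  have hEcM : Ec 0 ≤ Mc := by
    have hEcpos := hEc0 0 ⟨le_refl _, by norm_num⟩
    have hkey : 0 ≤ Ec 0 * (d2^2 - 2*(K*η)) := mul_nonneg hEcpos.le (by linarith)
    rw [hMcdef, le_div_iff₀ (by positivity : (0:ℝ) < d2^2)]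
    nlinarith [hEcval, hQcval]
  have hLM : L ≤ M := by
    have hEapos := hEa0 0 ⟨le_refl _, by norm_num⟩
    have hEcpos := hEc0 0 ⟨le_refl _, by norm_num⟩
    rw [hLdef, div_le_iff₀ (by linarith : (0:ℝ) < c - a), hMdef]
    nlinarith [mul_nonneg (by linarith : (0:ℝ) ≤ c - b) (by linarith : 0 ≤ Ma - Ea 0),
      mul_nonneg (by linarith : (0:ℝ) ≤ b - a) (by linarith : 0 ≤ Mc - Ec 0),
      mul_pos hMa0 (by linarith : (0:ℝ) < b - a), mul_pos hMc0 (by linarith : (0:ℝ) < c - b)]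
  -- the correction weight
  have hKη' : (K * η) ≠ 0 := hKη.ne'
  set B : ℝ := P / (K * η) with hBdef
  have hBval : B * (K * η) = P := by rw [hBdef]; exact div_mul_cancel₀ _ hKη'
  have hB2M : 2 * M ≤ B := by
    rw [hBdef, le_div_iff₀ hKη]
    linarith [hKP]
  clear_value L B
  set w : ℝ := (B - L)/(d1*d2) with hwdef
  have hw0 : 0 < w := by
    rw [hwdef]; exact div_pos (by linarith) (by positivity)
  have hwval : w * (d1 * d2) = B - L := by
    rw [hwdef]; exact div_mul_cancel₀ _ (by positivity)
  clear_value w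
  -- smoothness of the ingredients
  have hτsm : ContDiff ℝ (⊤ : ℕ∞) τ := by
    rw [hτdef]
    exact contDiff_const.mul (contDiff_const.sub
      (Real.contDiff_exp.comp (contDiff_id.sub contDiff_const)))
  have hfasm : ContDiff ℝ (⊤ : ℕ∞) (fun lam => f a lam) :=
    hf.comp (contDiff_const.prodMk contDiff_id)
  have hfcsm : ContDiff ℝ (⊤ : ℕ∞) (fun lam => f c lam) :=
    hf.comp (contDiff_const.prodMk contDiff_id)
  have hQasm : ContDiff ℝ (⊤ : ℕ∞) Qa := by
    rw [hQadef]; exact hτsm.sub contDiff_const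
  have hQcsm : ContDiff ℝ (⊤ : ℕ∞) Qc := by
    rw [hQcdef]; exact hτsm.sub contDiff_const
  have hEasm : ContDiff ℝ (⊤ : ℕ∞) Ea := by
    rw [hEadef]; exact hfasm.div hQasm (fun lam => (hQa0 lam).ne)
  have hEcsm : ContDiff ℝ (⊤ : ℕ∞) Ec := by
    rw [hEcdef]; exact hfcsm.div hQcsm (fun lam => (hQc0 lam).ne)
  -- the interpolating positive factor
  set e : ℝ → ℝ → ℝ :=
    fun x lam => ((c - x) * Ea lam + (x - a) * Ec lam)/(c - a) + w * ((x - a) * (c - x))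
    with hedef
  have hepos : ∀ lam ∈ Icc (0:ℝ) 1, ∀ x ∈ Icc a c, 0 < e x lam := by
    intro lam hlam x hx
    have h1 := hEa0 lam hlam
    have h2 := hEc0 lam hlam
    rw [hedef]
    have hterm : 0 < (c - x) * Ea lam + (x - a) * Ec lam := by
      rcases eq_or_lt_of_le hx.2 with he | hlt
      · rw [he]
        have h3 : (c - c) * Ea lam = 0 := by ring
        have h4 : (0:ℝ) < (c - a) * Ec lam := mul_pos (by linarith [hx.1, hab]) h2
        linarith
      · have h4 : (0:ℝ) < (c - x) * Ea lam := mul_pos (by linarith) h1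
        have h5 : (0:ℝ) ≤ (x - a) * Ec lam :=
          mul_nonneg (by linarith [hx.1]) h2.le
        linarith
    have hterm2 : 0 ≤ w * ((x - a) * (c - x)) :=
      mul_nonneg hw0.le (mul_nonneg (by linarith [hx.1]) (by linarith [hx.2]))
    have := div_pos hterm (by linarith : (0:ℝ) < c - a)
    linarith
  have hcane : (c - a) ≠ 0 := sub_ne_zero.mpr (by linarith)
  have heval_a : ∀ lam, e a lam = Ea lam := by
    intro lam; simp only [hedef]
    field_simp; ring
  have heval_c : ∀ lam, e c lam = Ec lam := by
    intro lam; simp only [hedef]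
    field_simp; ring
  have heval_b : e b 0 = B := by
    simp only [hedef]
    have h1 : ((c - b) * Ea 0 + (b - a) * Ec 0)/(c - a) = L := by rw [hLdef]
    have h2 : w * ((b - a) * (c - b)) = B - L := by
      rw [← hwval, hd1, hd2]
    rw [h1, h2]
    try ring
  clear_value e
  -- the deformation
  set F : ℝ → ℝ → ℝ → ℝ :=
    fun x lam σ => f x lam + σ * (e x lam * (τ lam - (x - b)^2) - f x lam) with hFdef
  have hF1 : ∀ x lam, F x lam 1 = e x lam * (τ lam - (x - b)^2) := by
    intro x lam; simp only [hFdef]; ring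
  clear_value F
  -- derivative in x of the deformed field
  have hders : ∀ lam y : ℝ, HasDerivAt (fun x => e x lam * (τ lam - (x - b)^2))
      (((Ec lam - Ea lam)/(c - a) + w * ((c - y) - (y - a))) * (τ lam - (y - b)^2)
        + e y lam * (-(2*(y - b)))) y := by
    intro lam y
    have hca : HasDerivAt (fun x : ℝ => c - x) (-1) y := (hasDerivAt_id y).const_sub c
    have hxa : HasDerivAt (fun x : ℝ => x - a) 1 y := (hasDerivAt_id y).sub_const a
    have hE : HasDerivAt (fun x => e x lam)
        ((Ec lam - Ea lam)/(c - a) + w * ((c - y) - (y - a))) y := by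
      simp only [hedef]
      have h0 := (((hca.mul_const (Ea lam)).add (hxa.mul_const (Ec lam))).div_const (c - a)).add
        ((hxa.mul hca).const_mul w)
      exact h0.congr_deriv (by ring)
    have hQ : HasDerivAt (fun x : ℝ => τ lam - (x - b)^2) (-(2*(y - b))) y := by
      have h0 := (((hasDerivAt_id y).sub_const b).pow 2).const_sub (τ lam)
      exact h0.congr_deriv (by simp)
    exact hE.mul hQ
  -- now the main splitting
  refine ⟨F, ?_, ?_, ?_, ?_, ?_, ?_, 1/2, ⟨by norm_num, by norm_num⟩, ?_, ?_, ?_⟩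
  · -- smoothness
    rw [hFdef, hedef]
    have hl : ContDiff ℝ (⊤ : ℕ∞) fun p : ℝ × ℝ × ℝ => p.2.1 := contDiff_fst.comp contDiff_snd
    have hx : ContDiff ℝ (⊤ : ℕ∞) fun p : ℝ × ℝ × ℝ => p.1 := contDiff_fst
    have hfp : ContDiff ℝ (⊤ : ℕ∞) fun p : ℝ × ℝ × ℝ => f p.1 p.2.1 :=
      hf.comp (hx.prodMk hl)
    have hep : ContDiff ℝ (⊤ : ℕ∞) fun p : ℝ × ℝ × ℝ =>
        ((c - p.1) * Ea p.2.1 + (p.1 - a) * Ec p.2.1)/(c - a) + w * ((p.1 - a) * (c - p.1)) :=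
      ((((contDiff_const.sub hx).mul (hEasm.comp hl)).add
        ((hx.sub contDiff_const).mul (hEcsm.comp hl))).div_const (c - a)).add
        (contDiff_const.mul ((hx.sub contDiff_const).mul (contDiff_const.sub hx)))
    have hQp : ContDiff ℝ (⊤ : ℕ∞) fun p : ℝ × ℝ × ℝ => τ p.2.1 - (p.1 - b)^2 :=
      (hτsm.comp hl).sub ((hx.sub contDiff_const).pow 2)
    exact hfp.add ((contDiff_snd.comp contDiff_snd).mul ((hep.mul hQp).sub hfp))
  · -- h1
    intro lam _ σ _
    simp only [hFdef]
    have h1 : e a lam * (τ lam - (a - b)^2) = f a lam := by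
      rw [heval_a lam]; simp only [hEadef]
      have h2 : τ lam - (a - b)^2 = Qa lam := by
        simp only [hQadef, hd1]; try ring
      rw [h2]
      exact div_mul_cancel₀ _ (hQa0 lam).ne
    rw [h1]
    try ring
  · -- h2
    intro lam _ σ _
    simp only [hFdef]
    have h1 : e c lam * (τ lam - (c - b)^2) = f c lam := by
      rw [heval_c lam]; simp only [hEcdef]
      have h2 : τ lam - (c - b)^2 = Qc lam := by
        simp only [hQcdef, hd2]; try ring
      rw [h2]
      exact div_mul_cancel₀ _ (hQc0 lam).ne
    rw [h1]
    try ring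
  · -- h3
    intro x hx σ hσ
    simp only [hFdef]
    have hf1 : f x 1 < 0 := hS3 x hx
    have hh1 : e x 1 * (τ 1 - (x - b)^2) < 0 := by
      apply mul_neg_of_pos_of_neg (hepos 1 ⟨by norm_num, le_refl _⟩ x hx)
      have := hτneg 1 (by norm_num)
      linarith [sq_nonneg (x - b)]
    exact stmt15_convex_neg hf1 hh1 hσ.1 hσ.2
  · -- h4
    intro σ _
    simp only [hFdef]
    have h1 : e b 0 * (τ 0 - (b - b)^2) = P := by
      rw [heval_b, hτzero]
      have : (b - b : ℝ) = 0 := by ring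
      rw [this]
      simpa using hBval
    rw [h1]; rw [hPdef] at h1 ⊢; ring
  · -- h5
    intro x lam
    simp only [hFdef]; ring
  · -- C1
    intro lam hlam
    obtain ⟨hlam0, hlam2⟩ := hlam
    have hlam01 : lam ∈ Icc (0:ℝ) 1 := ⟨hlam0, by linarith⟩
    have hT : 0 < τ lam := hτpos lam hlam2
    set r : ℝ := Real.sqrt (τ lam) with hrdef
    have hr0 : 0 < r := Real.sqrt_pos.mpr hT
    have hr2 : r^2 = τ lam := Real.sq_sqrt hT.le
    have hd1sq : (0:ℝ) < d1^2 := by positivity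
    have hd2sq : (0:ℝ) < d2^2 := by positivity
    have hrd1 : r < d1 := by
      have h1 : r^2 < d1^2 := by rw [hr2]; linarith [hτK lam]
      exact lt_of_pow_lt_pow_left₀ 2 hd10.le h1
    have hrd2 : r < d2 := by
      have h1 : r^2 < d2^2 := by rw [hr2]; linarith [hτK lam]
      exact lt_of_pow_lt_pow_left₀ 2 hd20.le h1
    have hua : a < b - r := by simp only [hd1] at hrd1; linarith
    have hsc : b + r < c := by simp only [hd2] at hrd2; linarith
    refine ⟨b - r, b + r, by linarith, ⟨by linarith, by linarith⟩, ⟨by linarith, by linarith⟩,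
      ?_, ?_, ?_, ?_, ?_, ?_⟩
    · rw [hF1]
      have : τ lam - (b - r - b)^2 = 0 := by rw [show (b - r - b)^2 = r^2 by ring, hr2]; ring
      rw [this, mul_zero]
    · rw [hF1]
      have : τ lam - (b + r - b)^2 = 0 := by rw [show (b + r - b)^2 = r^2 by ring, hr2]; ring
      rw [this, mul_zero]
    · -- uniqueness
      intro x hx hx0
      rw [hF1] at hx0
      have he0 := hepos lam hlam01 x hx
      have hQ0 : τ lam - (x - b)^2 = 0 := by
        rcases mul_eq_zero.mp hx0 with h | h
        · exact absurd h he0.ne'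
        · exact h
      have hsq : (x - b)^2 = r^2 := by rw [hr2]; linarith
      have : (x - (b - r)) * (x - (b + r)) = 0 := by linear_combination hsq
      rcases mul_eq_zero.mp this with h | h
      · left; linarith [sub_eq_zero.mp h]
      · right; linarith [sub_eq_zero.mp h]
    · -- positive derivative at u
      have hfun : (fun x => F x lam 1) = fun x => e x lam * (τ lam - (x - b)^2) :=
        funext fun x => hF1 x lam
      rw [hfun, (hders lam (b - r)).deriv]
      have hz : τ lam - (b - r - b)^2 = 0 := by
        rw [show (b - r - b)^2 = r^2 by ring, hr2]; ring
      rw [hz, mul_zero, zero_add, show -(2*(b - r - b)) = 2 * r by ring]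
      exact mul_pos (hepos lam hlam01 (b - r) ⟨by linarith, by linarith⟩) (by linarith)
    · -- negative derivative at s
      have hfun : (fun x => F x lam 1) = fun x => e x lam * (τ lam - (x - b)^2) :=
        funext fun x => hF1 x lam
      rw [hfun, (hders lam (b + r)).deriv]
      have hz : τ lam - (b + r - b)^2 = 0 := by
        rw [show (b + r - b)^2 = r^2 by ring, hr2]; ring
      rw [hz, mul_zero, zero_add, show -(2*(b + r - b)) = -(2 * r) by ring]
      have := mul_pos (hepos lam hlam01 (b + r) ⟨by linarith, by linarith⟩)
        (by linarith : (0:ℝ) < 2 * r)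
      linarith [this]
    · intro _
      exact ⟨⟨by linarith, by linarith⟩, ⟨by linarith, by linarith⟩⟩
  · -- C2
    have hb01 : b ∈ Icc a c := ⟨hab.le, hbc.le⟩
    have hhalf01 : (1/2 : ℝ) ∈ Icc (0:ℝ) 1 := by norm_num
    have hebpos := hepos (1/2) hhalf01 b hb01
    refine ⟨b, ⟨hab, hbc⟩, ?_, ?_, ?_, ?_, ?_⟩
    · rw [hF1]
      rw [show (b - b : ℝ)^2 = 0 by ring, hτhalf]
      ring
    · intro x hx hx0
      rw [hF1] at hx0
      have he0 := hepos (1/2) hhalf01 x hx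
      have hQ0 : τ (1/2) - (x - b)^2 = 0 := by
        rcases mul_eq_zero.mp hx0 with h | h
        · exact absurd h he0.ne'
        · exact h
      rw [hτhalf] at hQ0
      have : (x - b)^2 = 0 := by linarith
      have := pow_eq_zero_iff (n := 2) (by norm_num) |>.mp this
      linarith [sub_eq_zero.mp this]
    · -- first derivative vanishes
      have hfun : (fun x => F x (1/2 : ℝ) 1) = fun x => e x (1/2) * (τ (1/2) - (x - b)^2) :=
        funext fun x => hF1 x (1/2)
      rw [hfun, (hders (1/2) b).deriv, hτhalf]
      ring
    · -- second derivative is nonzero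
      have hfun : (fun x => F x (1/2 : ℝ) 1) = fun x => e x (1/2) * (τ (1/2) - (x - b)^2) :=
        funext fun x => hF1 x (1/2)
      rw [hfun]
      have hderiv_fun : deriv (fun x => e x (1/2) * (τ (1/2) - (x - b)^2)) =
          fun y => ((Ec (1/2) - Ea (1/2))/(c - a) + w * ((c - y) - (y - a))) *
            (τ (1/2) - (y - b)^2) + e y (1/2) * (-(2*(y - b))) :=
        funext fun y => (hders (1/2) y).deriv
      rw [hderiv_fun]
      -- derivative of the explicit derivative at b
      have hca : HasDerivAt (fun y : ℝ => c - y) (-1) b := (hasDerivAt_id b).const_sub c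
      have hxa : HasDerivAt (fun y : ℝ => y - a) 1 b := (hasDerivAt_id b).sub_const a
      have hD : HasDerivAt (fun y : ℝ => (Ec (1/2) - Ea (1/2))/(c - a) + w * ((c - y) - (y - a)))
          (w * (-1 - 1)) b := ((hca.sub hxa).const_mul w).const_add _
      have hQb : HasDerivAt (fun y : ℝ => τ (1/2) - (y - b)^2) (-(2*(b - b))) b := by
        have h0 := (((hasDerivAt_id b).sub_const b).pow 2).const_sub (τ (1/2))
        exact h0.congr_deriv (by simp)
      have hEb : HasDerivAt (fun y => e y (1/2))
          ((Ec (1/2) - Ea (1/2))/(c - a) + w * ((c - b) - (b - a))) b := by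
        simp only [hedef]
        have h0 := (((hca.mul_const (Ea (1/2))).add (hxa.mul_const (Ec (1/2)))).div_const
          (c - a)).add ((hxa.mul hca).const_mul w)
        exact h0.congr_deriv (by ring)
      have hQ'b : HasDerivAt (fun y : ℝ => -(2*(y - b))) (-2) b := by
        have h0 := (((hasDerivAt_id b).sub_const b).const_mul (2:ℝ)).neg
        exact h0.congr_deriv (by ring)
      have htot := (hD.mul hQb).add (hEb.mul hQ'b)
      erw [htot.deriv, hτhalf, show (b - b : ℝ) = 0 by ring]
      intro hcon
      norm_num at hcon
      exact absurd hcon hebpos.ne'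
    · -- lambda derivative is nonzero
      have hfun : (fun lam => F b lam 1) = fun lam => e b lam * (τ lam - (b - b)^2) :=
        funext fun lam => hF1 b lam
      rw [hfun]
      have hEad : Differentiable ℝ Ea := hEasm.differentiable (by simp)
      have hEcd : Differentiable ℝ Ec := hEcsm.differentiable (by simp)
      have hEbl : DifferentiableAt ℝ (fun lam => e b lam) (1/2) := by
        simp only [hedef]
        apply DifferentiableAt.add
        · exact (((differentiableAt_const _).mul (hEad _)).add
            ((differentiableAt_const _).mul (hEcd _))).div_const _
        · exact differentiableAt_const _
      have hτd : HasDerivAt τ (-K) (1/2) := by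
        rw [hτdef]
        have h0 : HasDerivAt (fun lam : ℝ => Real.exp (lam - 1/2))
            (Real.exp ((1:ℝ)/2 - 1/2) * 1) (1/2) := ((hasDerivAt_id _).sub_const _).exp
        have h1 := (h0.const_sub (1:ℝ)).const_mul K
        exact h1.congr_deriv (by norm_num)
      have htot := hEbl.hasDerivAt.mul (hτd.sub_const ((b - b)^2))
      erw [htot.deriv, hτhalf, show (b - b : ℝ) = 0 by ring]
      intro hcon
      norm_num at hcon
      rcases hcon with h | h
      · exact absurd h hebpos.ne'
      · exact absurd h hK0.ne'
  · -- C3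
    intro lam hlam x hx
    have hlam01 : lam ∈ Icc (0:ℝ) 1 := ⟨by linarith [hlam.1], hlam.2⟩
    rw [hF1]
    have he0 := hepos lam hlam01 x hx
    have hT := hτneg lam hlam.1
    have : e x lam * (τ lam - (x - b)^2) < 0 := by
      apply mul_neg_of_pos_of_neg he0
      linarith [sq_nonneg (x - b)]
    exact this.ne
end
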